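/- Let Φ : ℝ³ × ℝ → ℝ³ be a smooth flow map with Φ(a,0) = a, such that Φ(·,t) is a diffeomorphism of ℝ³ for every t; let u : ℝ³ × ℝ → ℝ³ be the C¹ Eulerian velocity field, i.e. u(Φ(a,t), t) = ∂ₜΦ(a,t); and let Ω : ℝ³ × ℝ → ℝ be a C² function with ∂ₜ²Φ(a,t) = (∇ₓΩ)(Φ(a,t), t) for all (a,t). If the initial velocity field u₀ = u(·,0) is irrotational, curl u₀ = 0 on ℝ³, then u(·,t) is irrotational for every t: curl u(·,t) = 0 on ℝ³. -/

import Mathlib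

open Matrix

abbrev V3 := Fin 3 → ℝ
abbrev Q3 := V3 × ℝ

/-- spatial basis direction in the product space -/
noncomputable def ee (i : Fin 3) : Q3 := (Pi.single i 1, 0)
/-- time direction -/
noncomputable def et : Q3 := (0, 1)

section helpers
variable {F : Type*} [NormedAddCommGroup F] [NormedSpace ℝ F]

lemma fd_fix_fst {g : Q3 → F} {x : V3} {t : ℝ}
    (hg : DifferentiableAt ℝ g (x, t)) (v : V3) :
    fderiv ℝ (fun y => g (y, t)) x v = fderiv ℝ g (x, t) (v, 0) := by
  have h1 : HasFDerivAt (fun y : V3 => (y, t)) (ContinuousLinearMap.inl ℝ V3 ℝ) x :=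
    hasFDerivAt_prodMk_left x t
  have h2 := (hg.hasFDerivAt.comp x h1).fderiv
  have : fderiv ℝ (fun y => g (y, t)) x = (fderiv ℝ g (x, t)).comp (ContinuousLinearMap.inl ℝ V3 ℝ) := h2
  rw [this]; rfl

lemma hd_fix_snd {g : Q3 → F} {a : V3} {t : ℝ}
    (hg : DifferentiableAt ℝ g (a, t)) :
    HasDerivAt (fun s => g (a, s)) (fderiv ℝ g (a, t) (0, 1)) t := by
  have h1 : HasDerivAt (fun s : ℝ => ((a, s) : Q3)) ((0 : V3), (1 : ℝ)) t :=
    (hasDerivAt_const t a).prodMk (hasDerivAt_id t)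
  exact hg.hasFDerivAt.comp_hasDerivAt t h1

lemma fderiv_comp_proj {f : Q3 → V3} {q : Q3} (hf : DifferentiableAt ℝ f q) (w : Q3) (k : Fin 3) :
    fderiv ℝ (fun p => f p k) q w = fderiv ℝ f q w k := by
  have h2 := ((ContinuousLinearMap.proj k (R := ℝ)
      (φ := fun _ : Fin 3 => ℝ)).hasFDerivAt.comp q hf.hasFDerivAt).fderiv
  have : fderiv ℝ (fun p => f p k) q
      = (ContinuousLinearMap.proj k).comp (fderiv ℝ f q) := h2
  rw [this]; rfl

lemma fderiv_swap {E : Type*} [NormedAddCommGroup E] [NormedSpace ℝ E] {f : E → ℝ} {x : E}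
    (hf : ContDiff ℝ 2 f) (v w : E) :
    fderiv ℝ (fun p => fderiv ℝ f p v) x w = fderiv ℝ (fun p => fderiv ℝ f p w) x v := by
  have hd1 : ContDiff ℝ 1 (fderiv ℝ f) := hf.fderiv_right (le_refl _)
  have hx : HasFDerivAt (fderiv ℝ f) (fderiv ℝ (fderiv ℝ f) x) x :=
    ((hd1.differentiable one_ne_zero) x).hasFDerivAt
  have key : ∀ z : E, fderiv ℝ (fun p => fderiv ℝ f p z) x
      = (ContinuousLinearMap.apply ℝ ℝ z).comp (fderiv ℝ (fderiv ℝ f) x) := by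
    intro z
    exact ((ContinuousLinearMap.apply ℝ ℝ z).hasFDerivAt.comp x hx).fderiv
  rw [key v, key w]
  have hsym := second_derivative_symmetric
    (f := f) (f' := fderiv ℝ f) (f'' := fderiv ℝ (fderiv ℝ f) x)
    (fun y => ((hf.differentiable two_ne_zero) y).hasFDerivAt) hx w v
  simpa using hsym

lemma clm_expand (f : V3 →L[ℝ] ℝ) (v : V3) : f v = ∑ l, v l * f (Pi.single l 1) := by
  conv_lhs => rw [← Finset.univ_sum_single v]
  rw [_root_.map_sum]
  refine Finset.sum_congr rfl fun l _ => ?_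
  have : Pi.single l (v l) = v l • (Pi.single l 1 : V3) := by
    rw [← Pi.single_smul]; simp
  rw [this, _root_.map_smul]; simp

end helpers

lemma comp_chain {g : Q3 → ℝ} {P : Q3 → V3} {q : Q3}
    (hg : DifferentiableAt ℝ g (P q, q.2)) (hP : DifferentiableAt ℝ P q) (i : Fin 3) :
    fderiv ℝ (fun p => g (P p, p.2)) q (ee i)
      = fderiv ℝ g (P q, q.2) (fderiv ℝ P q (ee i), 0) := by
  have hm : HasFDerivAt (fun p : Q3 => (P p, p.2))
      ((fderiv ℝ P q).prod (ContinuousLinearMap.snd ℝ V3 ℝ)) q :=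
    hP.hasFDerivAt.prodMk hasFDerivAt_snd
  have h2 := (hg.hasFDerivAt.comp q hm).fderiv
  have : fderiv ℝ (fun p => g (P p, p.2)) q
      = (fderiv ℝ g (P q, q.2)).comp ((fderiv ℝ P q).prod (ContinuousLinearMap.snd ℝ V3 ℝ)) := h2
  rw [this]; rfl

lemma fderiv_sum_mul {A B : Fin 3 → Q3 → ℝ} {q : Q3} (hA : ∀ k, DifferentiableAt ℝ (A k) q)
    (hB : ∀ k, DifferentiableAt ℝ (B k) q) (w : Q3) :
    fderiv ℝ (fun p => ∑ k, A k p * B k p) q w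
      = ∑ k, (fderiv ℝ (A k) q w * B k q + A k q * fderiv ℝ (B k) q w) := by
  rw [fderiv_fun_sum (A := fun k p => A k p * B k p) (fun k _ => (hA k).mul (hB k)), ContinuousLinearMap.sum_apply]
  refine Finset.sum_congr rfl fun k _ => ?_
  rw [fderiv_fun_mul (hA k) (hB k)]
  simp [mul_comm]
  ring

/-- `k`-th component of the flow map as a function on space-time. -/
noncomputable def Pc (Φ : V3 → ℝ → V3) (k : Fin 3) : Q3 → ℝ := fun q => Φ q.1 q.2 k
/-- `k`-th component of the Lagrangian velocity. -/
noncomputable def Vel (Φ : V3 → ℝ → V3) (k : Fin 3) : Q3 → ℝ :=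
  fun q => fderiv ℝ (Pc Φ k) q et
/-- `j`-th component of the pullback of the velocity 1-form. -/
noncomputable def XL (Φ : V3 → ℝ → V3) (j : Fin 3) : Q3 → ℝ :=
  fun q => ∑ k, Vel Φ k q * fderiv ℝ (Pc Φ k) q (ee j)



/-- The curl of a vector field on `Fin 3 → ℝ`. -/
noncomputable def curl3 (F : (Fin 3 → ℝ) → (Fin 3 → ℝ)) (x : Fin 3 → ℝ) : Fin 3 → ℝ :=
  ![fderiv ℝ (fun y => F y 2) x (Pi.single 1 1) - fderiv ℝ (fun y => F y 1) x (Pi.single 2 1),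
    fderiv ℝ (fun y => F y 0) x (Pi.single 2 1) - fderiv ℝ (fun y => F y 2) x (Pi.single 0 1),
    fderiv ℝ (fun y => F y 1) x (Pi.single 0 1) - fderiv ℝ (fun y => F y 0) x (Pi.single 1 1)]

/-- §12: under potential forces, if the initial velocity field is irrotational,
then the velocity field remains irrotational at all times. -/
theorem hankel_irrotational_persists
    (Φ : (Fin 3 → ℝ) → ℝ → (Fin 3 → ℝ)) (u : (Fin 3 → ℝ) → ℝ → (Fin 3 → ℝ))
    (Ω : (Fin 3 → ℝ) → ℝ → ℝ)
    (hΦ : ContDiff ℝ (⊤ : ℕ∞) (fun q : (Fin 3 → ℝ) × ℝ => Φ q.1 q.2))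
    (hΦ0 : ∀ a, Φ a 0 = a)
    (hdiffeo : ∀ t : ℝ, ∃ Ψ : (Fin 3 → ℝ) → (Fin 3 → ℝ), ContDiff ℝ (⊤ : ℕ∞) Ψ ∧
      Function.LeftInverse Ψ (fun a => Φ a t) ∧ Function.RightInverse Ψ (fun a => Φ a t))
    (hu : ContDiff ℝ 1 (fun q : (Fin 3 → ℝ) × ℝ => u q.1 q.2))
    (huΦ : ∀ a t, u (Φ a t) t = deriv (fun s => Φ a s) t)
    (hΩ : ContDiff ℝ 2 (fun q : (Fin 3 → ℝ) × ℝ => Ω q.1 q.2))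
    (hmotion : ∀ (a : Fin 3 → ℝ) (t : ℝ) (i : Fin 3),
      deriv (fun s => deriv (fun r => Φ a r) s) t i
        = fderiv ℝ (fun x => Ω x t) (Φ a t) (Pi.single i 1))
    (hinit : ∀ x : Fin 3 → ℝ, curl3 (fun y => u y 0) x = 0) :
    ∀ (t : ℝ) (x : Fin 3 → ℝ), curl3 (fun y => u y t) x = 0 := by
  -- the flow map on space-time
  set PP : Q3 → V3 := fun q => Φ q.1 q.2 with hPPdef
  -- basic smoothness facts
  have hPc : ∀ k, ContDiff ℝ (⊤ : ℕ∞) (Pc Φ k) := fun k =>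
    (ContinuousLinearMap.proj k (R := ℝ) (φ := fun _ : Fin 3 => ℝ)).contDiff.comp hΦ
  have hDPc : ∀ (k : Fin 3) (w : Q3), ContDiff ℝ (⊤ : ℕ∞) (fun q => fderiv ℝ (Pc Φ k) q w) := fun k w =>
    (ContinuousLinearMap.apply ℝ ℝ w).contDiff.comp ((hPc k).fderiv_right (by simp))
  have hVel : ∀ k, ContDiff ℝ (⊤ : ℕ∞) (Vel Φ k) := fun k => hDPc k et
  have hXL : ∀ j, ContDiff ℝ (⊤ : ℕ∞) (XL Φ j) :=
    fun j => ContDiff.sum fun k _ => (hVel k).mul (hDPc k (ee j))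
  have hPPd : ∀ q, DifferentiableAt ℝ PP q := fun q => (hΦ.differentiable (by simp)) q
  -- component commutation
  have hcomp : ∀ (q : Q3) (w : Q3) (k : Fin 3),
      fderiv ℝ (Pc Φ k) q w = fderiv ℝ PP q w k := fun q w k =>
    fderiv_comp_proj (hPPd q) w k
  -- Step A : Lagrangian velocity = Eulerian velocity along the flow
  have hder : ∀ (a : V3) (t : ℝ), HasDerivAt (fun s => Φ a s) (fderiv ℝ PP (a, t) et) t := by
    intro a t
    exact hd_fix_snd (g := PP) (hPPd (a, t))
  have hVu : ∀ (a : V3) (t : ℝ) (k : Fin 3), Vel Φ k (a, t) = u (Φ a t) t k := by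
    intro a t k
    have h1 : u (Φ a t) t = fderiv ℝ PP (a, t) et := by
      rw [huΦ a t, (hder a t).deriv]
    rw [show Vel Φ k (a, t) = fderiv ℝ (Pc Φ k) (a, t) et from rfl, hcomp, ← h1]
  -- Step B : the equation of motion in terms of `Vel`
  have hmot' : ∀ (a : V3) (t : ℝ) (k : Fin 3),
      fderiv ℝ (Vel Φ k) (a, t) et = fderiv ℝ (fun x => Ω x t) (Φ a t) (Pi.single k 1) := by
    intro a t k
    set W : Q3 → V3 := fun q => fderiv ℝ PP q et with hWdef
    have hW : ContDiff ℝ (⊤ : ℕ∞) W :=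
      (ContinuousLinearMap.apply ℝ V3 et).contDiff.comp (hΦ.fderiv_right (by simp))
    have hder2 : HasDerivAt (fun s => W (a, s)) (fderiv ℝ W (a, t) et) t :=
      hd_fix_snd ((hW.differentiable (by simp)) (a, t))
    have h2 : (fun s => deriv (fun r => Φ a r) s) = fun s => W (a, s) :=
      funext fun s => (hder a s).deriv
    have h3 : deriv (fun s => deriv (fun r => Φ a r) s) t = fderiv ℝ W (a, t) et := by
      rw [h2, hder2.deriv]
    have h4 : fderiv ℝ W (a, t) et k
        = fderiv ℝ (fun x => Ω x t) (Φ a t) (Pi.single k 1) := by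
      rw [← hmotion a t k, h3]
    have h5 : Vel Φ k = fun p => W p k := funext fun p => hcomp p et k
    rw [h5, fderiv_comp_proj ((hW.differentiable (by simp)) (a, t)) et k, h4]
  -- Step C : time derivative of the Lagrangian 1-form is an exact form
  set HH : Q3 → ℝ := fun p => Ω (PP p) p.2 + (2⁻¹ : ℝ) * ∑ k, Vel Φ k p * Vel Φ k p with hHHdef
  have hG2 : ContDiff ℝ 2 (fun p : Q3 => Ω (PP p) p.2) := by
    have : ContDiff ℝ 2 (fun p : Q3 => (PP p, p.2)) :=
      (hΦ.of_le (WithTop.coe_le_coe.mpr le_top)).prodMk contDiff_snd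
    exact hΩ.comp this
  have hHH : ContDiff ℝ 2 HH := by
    apply hG2.add
    exact (contDiff_const.mul (ContDiff.sum fun k _ => ((hVel k).mul (hVel k)).of_le (WithTop.coe_le_coe.mpr le_top)))
  have key1 : ∀ (q : Q3) (j : Fin 3),
      fderiv ℝ (XL Φ j) q et = fderiv ℝ HH q (ee j) := by
    intro q j
    obtain ⟨a, t⟩ := q
    -- expand the left side by the product rule
    have hL : fderiv ℝ (XL Φ j) (a, t) et
        = ∑ k, (fderiv ℝ (Vel Φ k) (a, t) et * fderiv ℝ (Pc Φ k) (a, t) (ee j)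
            + Vel Φ k (a, t) * fderiv ℝ (fun p => fderiv ℝ (Pc Φ k) p (ee j)) (a, t) et) :=
      fderiv_sum_mul (fun k => ((hVel k).differentiable (by simp)) _)
        (fun k => ((hDPc k (ee j)).differentiable (by simp)) _) et
    -- swap the mixed partial derivatives in the second summand
    have hswap : ∀ k : Fin 3, fderiv ℝ (fun p => fderiv ℝ (Pc Φ k) p (ee j)) (a, t) et
        = fderiv ℝ (Vel Φ k) (a, t) (ee j) := fun k =>
      fderiv_swap ((hPc k).of_le (WithTop.coe_le_coe.mpr le_top)) (ee j) et
    -- expand the right side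
    have hKd : ∀ p : Q3, DifferentiableAt ℝ (fun p : Q3 => ∑ k, Vel Φ k p * Vel Φ k p) p :=
      fun p => ((ContDiff.sum fun k _ => ((hVel k).mul (hVel k))).differentiable (by simp)) p
    have hGd : DifferentiableAt ℝ (fun p : Q3 => Ω (PP p) p.2) (a, t) :=
      (hG2.differentiable two_ne_zero) _
    have hR : fderiv ℝ HH (a, t) (ee j)
        = fderiv ℝ (fun p : Q3 => Ω (PP p) p.2) (a, t) (ee j)
          + (2⁻¹ : ℝ) * ∑ k, (fderiv ℝ (Vel Φ k) (a, t) (ee j) * Vel Φ k (a, t)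
              + Vel Φ k (a, t) * fderiv ℝ (Vel Φ k) (a, t) (ee j)) := by
      rw [hHHdef]
      rw [fderiv_fun_add hGd ((hKd _).const_mul _), ContinuousLinearMap.add_apply]
      congr 1
      rw [fderiv_const_mul (hKd _), ContinuousLinearMap.smul_apply]
      rw [fderiv_sum_mul (fun k => ((hVel k).differentiable (by simp)) _)
        (fun k => ((hVel k).differentiable (by simp)) _)]
      simp
    -- the potential term
    have hgrad : fderiv ℝ (fun p : Q3 => Ω (PP p) p.2) (a, t) (ee j)
        = ∑ k, fderiv ℝ (Pc Φ k) (a, t) (ee j)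
            * fderiv ℝ (fun x => Ω x t) (Φ a t) (Pi.single k 1) := by
      have hΩd : DifferentiableAt ℝ (fun w : Q3 => Ω w.1 w.2) (PP (a, t), t) :=
        (hΩ.differentiable (by norm_num)) _
      have h1 := comp_chain (g := fun w : Q3 => Ω w.1 w.2) (P := PP) (q := (a, t))
        hΩd (hPPd _) j
      have h2 : fderiv ℝ (fun w : Q3 => Ω w.1 w.2) (PP (a, t), t)
            (fderiv ℝ PP (a, t) (ee j), 0)
          = fderiv ℝ (fun y => Ω y t) (PP (a, t)) (fderiv ℝ PP (a, t) (ee j)) :=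
        (fd_fix_fst hΩd _).symm
      have h3 : fderiv ℝ (fun y => Ω y t) (PP (a, t)) (fderiv ℝ PP (a, t) (ee j))
          = ∑ k, (fderiv ℝ PP (a, t) (ee j) k)
              * fderiv ℝ (fun y => Ω y t) (PP (a, t)) (Pi.single k 1) :=
        clm_expand _ _
      calc fderiv ℝ (fun p : Q3 => Ω (PP p) p.2) (a, t) (ee j)
          = fderiv ℝ (fun w : Q3 => Ω w.1 w.2) (PP (a, t), t)
              (fderiv ℝ PP (a, t) (ee j), 0) := h1
        _ = ∑ k, (fderiv ℝ PP (a, t) (ee j) k)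
              * fderiv ℝ (fun y => Ω y t) (PP (a, t)) (Pi.single k 1) := by rw [h2, h3]
        _ = ∑ k, fderiv ℝ (Pc Φ k) (a, t) (ee j)
              * fderiv ℝ (fun x => Ω x t) (Φ a t) (Pi.single k 1) := by
            refine Finset.sum_congr rfl fun k _ => ?_
            rw [hcomp]
    rw [hL, hR, hgrad]
    simp only [hswap, hmot']
    rw [Finset.mul_sum, ← Finset.sum_add_distrib]
    refine Finset.sum_congr rfl fun k _ => ?_
    ring
  -- Step D : the Lagrangian vorticity is constant in time and vanishes initially
  have hDXL : ∀ (j : Fin 3) (w : Q3), ContDiff ℝ (⊤ : ℕ∞) (fun q => fderiv ℝ (XL Φ j) q w) :=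
    fun j w => (ContinuousLinearMap.apply ℝ ℝ w).contDiff.comp ((hXL j).fderiv_right (by simp))
  -- constancy in time
  have hconst : ∀ (i j : Fin 3) (a : V3) (t : ℝ),
      fderiv ℝ (XL Φ j) (a, t) (ee i) - fderiv ℝ (XL Φ i) (a, t) (ee j)
        = fderiv ℝ (XL Φ j) (a, 0) (ee i) - fderiv ℝ (XL Φ i) (a, 0) (ee j) := by
    intro i j a t
    set g : ℝ → ℝ := fun s => fderiv ℝ (XL Φ j) (a, s) (ee i) - fderiv ℝ (XL Φ i) (a, s) (ee j)
      with hgdef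
    have hkey : ∀ (i' j' : Fin 3) (s : ℝ),
        fderiv ℝ (fun p => fderiv ℝ (XL Φ j') p (ee i')) (a, s) et
          = fderiv ℝ (fun p => fderiv ℝ HH p (ee i')) (a, s) (ee j') := by
      intro i' j' s
      have h1 : fderiv ℝ (fun p => fderiv ℝ (XL Φ j') p (ee i')) (a, s) et
          = fderiv ℝ (fun p => fderiv ℝ (XL Φ j') p et) (a, s) (ee i') :=
        fderiv_swap ((hXL j').of_le (WithTop.coe_le_coe.mpr le_top)) (ee i') et
      have h2 : (fun p => fderiv ℝ (XL Φ j') p et) = fun p => fderiv ℝ HH p (ee j') :=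
        funext fun p => key1 p j'
      rw [h1, h2]
      exact fderiv_swap hHH (ee j') (ee i')
    have hgd : ∀ s : ℝ, HasDerivAt g 0 s := by
      intro s
      have d1 : HasDerivAt (fun r => fderiv ℝ (XL Φ j) (a, r) (ee i))
          (fderiv ℝ (fun p => fderiv ℝ (XL Φ j) p (ee i)) (a, s) et) s :=
        hd_fix_snd (((hDXL j (ee i)).differentiable (by simp)) _)
      have d2 : HasDerivAt (fun r => fderiv ℝ (XL Φ i) (a, r) (ee j))
          (fderiv ℝ (fun p => fderiv ℝ (XL Φ i) p (ee j)) (a, s) et) s :=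
        hd_fix_snd (((hDXL i (ee j)).differentiable (by simp)) _)
      have := d1.sub d2
      have hs : fderiv ℝ (fun p => fderiv ℝ HH p (ee i)) (a, s) (ee j)
          = fderiv ℝ (fun p => fderiv ℝ HH p (ee j)) (a, s) (ee i) :=
        fderiv_swap hHH (ee i) (ee j)
      rw [hkey i j s, hkey j i s, hs, sub_self] at this
      exact this
    have : g t = g 0 :=
      is_const_of_deriv_eq_zero (fun s => (hgd s).differentiableAt)
        (fun s => (hgd s).deriv) t 0
    exact this
  -- initial condition : `XL j (·,0) = u · 0 j`
  have hX0 : ∀ (j : Fin 3) (y : V3), XL Φ j (y, 0) = u y 0 j := by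
    intro j y
    have hDj : ∀ k : Fin 3, fderiv ℝ (Pc Φ k) (y, 0) (ee j) = if k = j then 1 else 0 := by
      intro k
      have h1 : fderiv ℝ (fun y' => Pc Φ k (y', 0)) y (Pi.single j 1)
          = fderiv ℝ (Pc Φ k) (y, 0) (ee j) :=
        fd_fix_fst (((hPc k).differentiable (by simp)) _) _
      have h2 : (fun y' : V3 => Pc Φ k (y', 0)) = fun y' : V3 => y' k := by
        funext y'
        show Φ y' 0 k = y' k
        rw [hΦ0]
      have h3 : fderiv ℝ (fun y' : V3 => y' k) y (Pi.single j 1) = if k = j then 1 else 0 := by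
        have : fderiv ℝ (fun y' : V3 => y' k) y
            = (ContinuousLinearMap.proj k (R := ℝ) (φ := fun _ : Fin 3 => ℝ)) :=
          (ContinuousLinearMap.proj k (R := ℝ)
            (φ := fun _ : Fin 3 => ℝ)).hasFDerivAt.fderiv
        rw [this]
        simp [Pi.single_apply]
      rw [← h1, h2, h3]
    have hV0 : ∀ k : Fin 3, Vel Φ k (y, 0) = u y 0 k := by
      intro k
      rw [hVu y 0 k, hΦ0]
    show (∑ k, Vel Φ k (y, 0) * fderiv ℝ (Pc Φ k) (y, 0) (ee j)) = u y 0 j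
    simp [hDj, hV0, Finset.sum_ite_eq']
  -- vanishing of the initial Lagrangian vorticity
  have hω0 : ∀ (i j : Fin 3) (a : V3),
      fderiv ℝ (XL Φ j) (a, 0) (ee i) - fderiv ℝ (XL Φ i) (a, 0) (ee j) = 0 := by
    intro i j a
    have hE : ∀ (j' i' : Fin 3), fderiv ℝ (XL Φ j') (a, 0) (ee i')
        = fderiv ℝ (fun y => u y 0 j') a (Pi.single i' 1) := by
      intro j' i'
      have h1 : fderiv ℝ (fun y => XL Φ j' (y, 0)) a (Pi.single i' 1)
          = fderiv ℝ (XL Φ j') (a, 0) (ee i') :=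
        fd_fix_fst (((hXL j').differentiable (by simp)) _) _
      have h2 : (fun y => XL Φ j' (y, 0)) = fun y => u y 0 j' := funext (hX0 j')
      rw [← h1, h2]
    rw [hE j i, hE i j]
    have h0 := hinit a
    set f : Fin 3 → Fin 3 → ℝ :=
      fun j' i' => fderiv ℝ (fun y => u y 0 j') a (Pi.single i' 1) with hfdef
    have c0 : f 2 1 - f 1 2 = 0 := by
      have := congrFun h0 0; simpa [curl3, hfdef] using this
    have c1 : f 0 2 - f 2 0 = 0 := by
      have := congrFun h0 1; simpa [curl3, hfdef] using this
    have c2 : f 1 0 - f 0 1 = 0 := by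
      have := congrFun h0 2; simpa [curl3, hfdef] using this
    show f j i - f i j = 0
    clear_value f
    clear hfdef h0
    fin_cases i <;> fin_cases j
    · exact sub_self _
    · exact (show f 1 0 - f 0 1 = 0 by linarith)
    · exact (show f 2 0 - f 0 2 = 0 by linarith)
    · exact (show f 0 1 - f 1 0 = 0 by linarith)
    · exact sub_self _
    · exact (show f 2 1 - f 1 2 = 0 by linarith)
    · exact (show f 0 2 - f 2 0 = 0 by linarith)
    · exact (show f 1 2 - f 2 1 = 0 by linarith)
    · exact sub_self _
  have key2 : ∀ (i j : Fin 3) (q : Q3),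
      fderiv ℝ (XL Φ j) q (ee i) = fderiv ℝ (XL Φ i) q (ee j) := by
    intro i j q
    obtain ⟨a, t⟩ := q
    have := (hconst i j a t).trans (hω0 i j a)
    linarith [this]
  -- Step E : transfer back to Eulerian coordinates
  intro t x
  obtain ⟨Ψ, hΨs, hΨl, hΨr⟩ := hdiffeo t
  set a : V3 := Ψ x with hadef
  have hφax : Φ a t = x := hΨr x
  set q : Q3 := (a, t) with hqdef
  set A : Matrix (Fin 3) (Fin 3) ℝ :=
    fun l k => fderiv ℝ (fun y => u y t k) x (Pi.single l 1) with hAdef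
  set M : Matrix (Fin 3) (Fin 3) ℝ := fun k i => fderiv ℝ (Pc Φ k) q (ee i) with hMdef
  have huk : ∀ k : Fin 3, ContDiff ℝ 1 (fun w : Q3 => u w.1 w.2 k) := fun k =>
    (ContinuousLinearMap.proj k (R := ℝ) (φ := fun _ : Fin 3 => ℝ)).contDiff.comp hu
  have hVelu : ∀ k : Fin 3, Vel Φ k = fun p : Q3 => u (PP p) p.2 k := by
    intro k; funext p
    exact hVu p.1 p.2 k
  have hPPq : PP q = x := hφax
  have hdVel : ∀ (k i : Fin 3), fderiv ℝ (Vel Φ k) q (ee i) = ∑ l, M l i * A l k := by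
    intro k i
    rw [hVelu k]
    have hud : DifferentiableAt ℝ (fun w : Q3 => u w.1 w.2 k) (PP q, q.2) :=
      ((huk k).differentiable one_ne_zero) _
    rw [comp_chain hud (hPPd q) i]
    have h2 : fderiv ℝ (fun w : Q3 => u w.1 w.2 k) (PP q, q.2) (fderiv ℝ PP q (ee i), 0)
        = fderiv ℝ (fun y => u y q.2 k) (PP q) (fderiv ℝ PP q (ee i)) :=
      (fd_fix_fst hud _).symm
    rw [h2, clm_expand]
    refine Finset.sum_congr rfl fun l _ => ?_
    rw [hPPq, ← hcomp q (ee i) l]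
  have hexp : ∀ i j : Fin 3, fderiv ℝ (XL Φ j) q (ee i)
      = ∑ k, ((∑ l, M l i * A l k) * M k j
          + Vel Φ k q * fderiv ℝ (fun p => fderiv ℝ (Pc Φ k) p (ee j)) q (ee i)) := by
    intro i j
    rw [show XL Φ j = fun p => ∑ k, Vel Φ k p * fderiv ℝ (Pc Φ k) p (ee j) from rfl]
    rw [fderiv_sum_mul (fun k => ((hVel k).differentiable (by simp)) _)
      (fun k => ((hDPc k (ee j)).differentiable (by simp)) _)]
    exact Finset.sum_congr rfl fun k _ => by rw [hdVel k i]
  have hMSM : ∀ i j : Fin 3,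
      ∑ k, (∑ l, M l i * A l k) * M k j = ∑ k, (∑ l, M l j * A l k) * M k i := by
    intro i j
    have h := key2 i j q
    rw [hexp i j, hexp j i] at h
    have hsym2 : ∀ k : Fin 3,
        fderiv ℝ (fun p => fderiv ℝ (Pc Φ k) p (ee j)) q (ee i)
          = fderiv ℝ (fun p => fderiv ℝ (Pc Φ k) p (ee i)) q (ee j) := fun k =>
      fderiv_swap ((hPc k).of_le (WithTop.coe_le_coe.mpr le_top)) (ee j) (ee i)
    simp only [hsym2] at h
    rw [Finset.sum_add_distrib, Finset.sum_add_distrib] at h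
    exact add_right_cancel h
  -- invertibility of the flow derivative
  set φf : V3 → V3 := fun y => Φ y t with hφdef
  have hφc : ContDiff ℝ (⊤ : ℕ∞) φf := hΦ.comp (contDiff_id.prodMk contDiff_const)
  have hcomp1 : (fderiv ℝ φf a).comp (fderiv ℝ Ψ x) = ContinuousLinearMap.id ℝ V3 := by
    have hid : (fun y => φf (Ψ y)) = id := funext fun y => hΨr y
    have hΨd : DifferentiableAt ℝ Ψ x := (hΨs.differentiable (by simp)) x
    have h1 : HasFDerivAt (fun y => φf (Ψ y)) ((fderiv ℝ φf a).comp (fderiv ℝ Ψ x)) x :=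
      ((hφc.differentiable (by simp)) a).hasFDerivAt.comp x hΨd.hasFDerivAt
    rw [hid] at h1
    exact h1.unique (hasFDerivAt_id x)
  set Mm := LinearMap.toMatrix' ((fderiv ℝ φf a) : V3 →ₗ[ℝ] V3) with hMmdef
  set Nm := LinearMap.toMatrix' ((fderiv ℝ Ψ x) : V3 →ₗ[ℝ] V3) with hNmdef
  have hMN : Mm * Nm = 1 := by
    rw [hMmdef, hNmdef, ← LinearMap.toMatrix'_comp, ← ContinuousLinearMap.toLinearMap_comp, hcomp1]
    simp
  have hMmM : Mm = M := by
    ext k i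
    rw [hMmdef, LinearMap.toMatrix'_apply]
    have hb : (fun j' : Fin 3 => if j' = i then (1:ℝ) else 0) = Pi.single i 1 :=
      funext fun j' => (Pi.single_apply i (1:ℝ) j').symm
    show fderiv ℝ φf a (Pi.single i 1) k = M k i
    have h1 : fderiv ℝ (fun y => PP (y, t)) a (Pi.single i 1)
        = fderiv ℝ PP (a, t) (Pi.single i 1, 0) := fd_fix_fst (hPPd _) _
    have h2 : fderiv ℝ φf a (Pi.single i 1) = fderiv ℝ PP (a, t) (Pi.single i 1, 0) := h1
    rw [h2]
    exact (hcomp q (ee i) k).symm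
  have hzero : Mᵀ * (A - Aᵀ) * M = 0 := by
    ext i j
    have h := hMSM i j
    show (Mᵀ * (A - Aᵀ) * M) i j = 0
    rw [Matrix.mul_apply]
    have e0 : ∀ k : Fin 3, (Mᵀ * (A - Aᵀ)) i k
        = ∑ l, (M l i * A l k - M l i * A k l) := by
      intro k
      rw [Matrix.mul_apply]
      exact Finset.sum_congr rfl fun l _ => by
        rw [Matrix.transpose_apply, Matrix.sub_apply, Matrix.transpose_apply, mul_sub]
    have e1 : ∑ k, (Mᵀ * (A - Aᵀ)) i k * M k j
        = (∑ k, (∑ l, M l i * A l k) * M k j) - ∑ k, ∑ l, M l i * A k l * M k j := by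
      simp only [e0, sub_mul, Finset.sum_sub_distrib, Finset.sum_mul]
    have e2 : ∑ k, ∑ l, M l i * A k l * M k j = ∑ k, (∑ l, M l j * A l k) * M k i := by
      rw [Finset.sum_comm]
      refine Finset.sum_congr rfl fun k _ => ?_
      rw [Finset.sum_mul]
      refine Finset.sum_congr rfl fun l _ => ?_
      ring
    rw [e1, e2, hMSM i j, sub_self]
  have hNM : M * Nm = 1 := by rw [← hMmM]; exact hMN
  have hS : A - Aᵀ = 0 := by
    have h1 : A - Aᵀ = (M * Nm)ᵀ * (A - Aᵀ) * (M * Nm) := by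
      rw [hNM]; simp
    have h2 : (M * Nm)ᵀ * (A - Aᵀ) * (M * Nm)
        = Nmᵀ * (Mᵀ * (A - Aᵀ) * M) * Nm := by
      rw [Matrix.transpose_mul]
      noncomm_ring [Matrix.mul_assoc]
    rw [h1, h2, hzero]
    simp
  -- conclude
  have hSent : ∀ l k : Fin 3, fderiv ℝ (fun y => u y t k) x (Pi.single l 1)
      - fderiv ℝ (fun y => u y t l) x (Pi.single k 1) = 0 := by
    intro l k
    have := congrFun (congrFun hS l) k
    rw [Matrix.sub_apply, Matrix.transpose_apply, Matrix.zero_apply] at this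
    exact this
  funext i
  fin_cases i
  · exact hSent 1 2
  · exact hSent 2 0
  · exact hSent 0 1
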